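/- arXiv:2212.03055 — 9 statements merged into one kernel-verified Lean document; each statement's English description precedes it below -/
import Mathlib

section
/- Let G be a Polish topological group with topology σ. Suppose ω is a Hausdorff group topology on G coarser than σ, and suppose there is a bijective homomorphism f : G → H onto a Polish topological group H that is continuous when G carries the topology ω. Then ω = σ. -/
/-!
Since `σ` refines `ω`, the map `f` is a continuous bijective homomorphism of Polish groups for
`σ`, hence open by the open mapping theorem for Polish groups. So `σ` is induced by `f`, which is
`ω`-continuous, and every `σ`-open set is `ω`-open. The open mapping theorem comes from Pettis'
lemma: the image of a neighbourhood `W` of `1` is Borel by Lusin–Souslin, and nonmeagre since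
countably many translates of it cover `H`, so `f '' W * (f '' W)⁻¹` is a neighbourhood of `1`.
-/

open Set Filter Topology TopologicalSpace Pointwise

section Translation

variable {G X : Type*} [Group G] [TopologicalSpace X] [MulAction G X] [ContinuousConstSMul G X]

theorem Filter.EventuallyEq.smul_set_residual {s t : Set X} (h : s =ᵇ t) (g : G) :
    g • s =ᵇ g • t := by
  have hg : Tendsto (g⁻¹ • · : X → X) (residual X) (residual X) :=
    tendsto_residual_of_isOpenMap (continuous_const_smul _) (isOpenMap_smul _)
  rw [← preimage_smul_inv g s, ← preimage_smul_inv g t]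
  exact h.comp_tendsto hg

theorem IsMeagre.smul_set {s : Set X} (h : IsMeagre s) (g : G) : IsMeagre (g • s) := by
  have hs : s =ᵇ (∅ : Set X) := eventuallyEq_empty.2 h
  exact eventuallyEq_empty.1 (by simpa only [smul_set_empty] using hs.smul_set_residual g)

end Translation

section Pettis

variable {G : Type*} [Group G] [TopologicalSpace G] [IsTopologicalGroup G]

/-- Pettis' lemma. -/
theorem BaireMeasurableSet.mul_inv_mem_nhds_one [BaireSpace G] {A : Set G}
    (hA : BaireMeasurableSet A) (hA_nonmeagre : ¬IsMeagre A) : A * A⁻¹ ∈ 𝓝 (1 : G) := by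
  obtain ⟨O, hO, hAO⟩ := hA.residualEq_isOpen
  obtain ⟨o, ho⟩ : O.Nonempty := by
    refine nonempty_iff_ne_empty.2 fun hO_empty => hA_nonmeagre ?_
    exact eventuallyEq_empty.1 (hO_empty ▸ hAO)
  have hOO : O * O⁻¹ ∈ 𝓝 (1 : G) :=
    (hO.mul_right (t := O⁻¹)).mem_nhds ⟨o, ho, o⁻¹, by simpa, mul_inv_cancel o⟩
  refine mem_of_superset hOO ?_
  rintro _ ⟨a, ha, b, hb, rfl⟩
  -- `O ∩ (a * b) • O` is a nonempty open set, hence nonmeagre, and it agrees with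
  -- `A ∩ (a * b) • A` up to a meagre set.
  have hOg : (O ∩ (a * b) • O).Nonempty :=
    ⟨a, ha, b⁻¹, hb, by simp [smul_eq_mul, mul_assoc]⟩
  have hAg : (A ∩ (a * b) • A).Nonempty := by
    refine nonempty_iff_ne_empty.2 fun hAg_empty => not_isMeagre_of_isOpen
      (hO.inter (hO.smul (a * b))) hOg (eventuallyEq_empty.1 ?_)
    rw [← hAg_empty]
    exact hAO.symm.inter (hAO.symm.smul_set_residual (a * b))
  obtain ⟨_, hx, y, hy, rfl⟩ := hAg
  exact ⟨(a * b) • y, hx, y⁻¹, inv_mem_inv.2 hy, by simp [smul_eq_mul]⟩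

variable {H : Type*} [Group H] [TopologicalSpace H] [IsTopologicalGroup H]

theorem MonoidHom.not_isMeagre_image_of_mem_nhds_one [SeparableSpace G] [BaireSpace H]
    (f : G →* H) (hf : Function.Surjective f) {W : Set G} (hW : W ∈ 𝓝 1) :
    ¬IsMeagre (f '' W) := by
  obtain ⟨D, hD_countable, hD_dense⟩ := exists_countable_dense G
  have hcover : (univ : Set H) ⊆ ⋃ d : D, f d • f '' W := by
    intro y _
    obtain ⟨g, rfl⟩ := hf y
    obtain ⟨_, hdD, w, hw, rfl⟩ := hD_dense.exists_mem_open (isOpen_interior.inv.smul g)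
      ⟨g, 1, by simpa using mem_interior_iff_mem_nhds.2 hW, mul_one g⟩
    refine mem_iUnion.2 ⟨⟨_, hdD⟩, f w⁻¹, mem_image_of_mem f (interior_subset hw), ?_⟩
    simp [smul_eq_mul, mul_assoc]
  intro hmeagre
  have := hD_countable.to_subtype
  refine not_isMeagre_of_isOpen (isOpen_univ (X := H)) ⟨1, trivial⟩ ?_
  exact (isMeagre_iUnion fun d : D => hmeagre.smul_set (f d)).mono hcover

end Pettis

section OpenMapping

variable {G H : Type*} [Group G] [TopologicalSpace G] [IsTopologicalGroup G]
  [Group H] [TopologicalSpace H] [IsTopologicalGroup H]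

theorem MonoidHom.isOpenMap_of_baireMeasurableSet_image [SeparableSpace G] [BaireSpace H]
    (f : G →* H) (hf : Function.Surjective f)
    (hf_image : ∀ U : Set G, IsOpen U → BaireMeasurableSet (f '' U)) : IsOpenMap f := by
  refine IsTopologicalGroup.isOpenMap_iff_nhds_one.2 (le_map_iff.2 fun U hU => ?_)
  obtain ⟨V, hV, hV1, hVU⟩ := exists_open_nhds_one_mul_subset hU
  have hW : IsOpen (V ∩ V⁻¹) := hV.inter hV.inv
  have hWU : (V ∩ V⁻¹) * (V ∩ V⁻¹)⁻¹ ⊆ U := by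
    refine (mul_subset_mul inter_subset_left ?_).trans hVU
    rw [inter_inv, inv_inv]
    exact inter_subset_right
  have hW_nonmeagre := f.not_isMeagre_image_of_mem_nhds_one hf (hW.mem_nhds ⟨hV1, by simpa⟩)
  have hfW := (hf_image _ hW).mul_inv_mem_nhds_one hW_nonmeagre
  rw [← image_inv, ← image_mul] at hfW
  exact mem_of_superset hfW (image_mono hWU)

theorem MonoidHom.isOpenMap_of_polishSpace [PolishSpace G] [PolishSpace H]
    (f : G →* H) (hf : Function.Bijective f) (hf_cont : Continuous f) : IsOpenMap f := by
  borelize G H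
  refine f.isOpenMap_of_baireMeasurableSet_image hf.2 fun U hU => ?_
  -- Lusin–Souslin: injective continuous images of Borel sets are Borel.
  exact (hU.measurableSet.image_of_continuousOn_injOn hf_cont.continuousOn
    hf.1.injOn).baireMeasurableSet

end OpenMapping

theorem stmt0_general {G H : Type*} [Group G] [Group H]
    (σ ω : TopologicalSpace G)
    (hσgrp : @IsTopologicalGroup G σ _) (hσpol : @PolishSpace G σ)
    (hcoarser : σ ≤ ω)
    [TopologicalSpace H] [IsTopologicalGroup H] [PolishSpace H]
    (f : G →* H) (hbij : Function.Bijective f)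
    (hcont : @Continuous G H ω _ f) :
    ω = σ := by
  -- make `σ` the instance topology on `G`
  let _ := σ
  have hf_cont : Continuous f := continuous_le_dom hcoarser hcont
  have hσ_induced : σ = TopologicalSpace.induced f ‹_› :=
    (IsOpenEmbedding.of_continuous_injective_isOpenMap hf_cont hbij.1
      (f.isOpenMap_of_polishSpace hbij hf_cont)).eq_induced
  exact le_antisymm (hσ_induced ▸ continuous_iff_le_induced.1 hcont) hcoarser

/-- Let `G` be a Polish topological group with topology `σ`. Suppose `ω` is a
Hausdorff group topology on `G` coarser than `σ`, and suppose there is a bijective homomorphism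
`f : G → H` onto a Polish topological group `H` that is continuous when `G` carries the
topology `ω`. Then `ω = σ`. -/
theorem stmt0 {G H : Type*} [Group G] [Group H]
    (σ ω : TopologicalSpace G)
    (hσgrp : @IsTopologicalGroup G σ _) (hσpol : @PolishSpace G σ)
    (hωgrp : @IsTopologicalGroup G ω _) (hωt2 : @T2Space G ω)
    (hcoarser : σ ≤ ω)
    [TopologicalSpace H] [IsTopologicalGroup H] [PolishSpace H]
    (f : G →* H) (hbij : Function.Bijective f)
    (hcont : @Continuous G H ω _ f) :
    ω = σ :=
  stmt0_general σ ω hσgrp hσpol hcoarser f hbij hcont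
end

section
/- (Merson's Lemma) Let G be a group carrying two Hausdorff group topologies ω ≤ σ (ω coarser than σ). Suppose there is a subgroup H ≤ G such that the subspace topologies induced by ω and σ on H coincide, and the quotient topologies induced by ω and σ on the coset space G/H coincide. Then ω = σ. -/
open Topology Pointwise

/-!
Since both topologies are group topologies it suffices to show that every `σ`-neighbourhood `U`
of `1` is an `ω`-neighbourhood. Take a `σ`-open `V ∋ 1` with `V * V ⊆ U`, an `ω`-open `O` with
`O ∩ H = V ∩ H` (subspace topologies agree) and an `ω`-open `O' ∋ 1` with `O' * O' ⊆ O`.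
The set `S * H` with `S = V ∩ O'⁻¹` is a union of cosets which is `σ`-open, hence `ω`-open
(quotient topologies agree). If `g = v h ∈ O'` with `v ∈ S`, `h ∈ H`, then `h = v⁻¹ g ∈ O' * O'`
lies in `O ∩ H ⊆ V`, so `O' ∩ S * H` is an `ω`-neighbourhood of `1` inside `V * V ⊆ U`.
-/

theorem exists_isOpen_inter_eq_of_induced_eq {X : Type*} {t t' : TopologicalSpace X} {s : Set X}
    (h : t.induced ((↑) : s → X) = t'.induced (↑)) {V : Set X} (hV : IsOpen[t'] V) :
    ∃ O, IsOpen[t] O ∧ s ∩ O = s ∩ V := by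
  have hVs : IsOpen[t.induced ((↑) : s → X)] ((↑) ⁻¹' V) := h ▸ isOpen_induced (t := t') hV
  obtain ⟨O, hO, hOV⟩ := (isOpen_induced_iff (t := t)).mp hVs
  exact ⟨O, hO, Subtype.preimage_coe_eq_preimage_coe_iff.mp hOV⟩

section Group

variable {G : Type*} [Group G]

theorem isOpen_coinduced_mk_image_iff (t : TopologicalSpace G) (H : Subgroup G) (A : Set G) :
    IsOpen[t.coinduced (QuotientGroup.mk : G → G ⧸ H)] (QuotientGroup.mk '' A) ↔
      IsOpen[t] (A * H) := by
  rw [isOpen_coinduced, QuotientGroup.preimage_image_mk_eq_mul]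

theorem inter_mul_subgroup_subset_mul {H : Subgroup G} {V O O' : Set G}
    (hO : (H : Set G) ∩ O ⊆ V) (hO' : O' * O' ⊆ O) :
    O' ∩ ((V ∩ O'⁻¹) * H) ⊆ V * V := by
  rintro g ⟨hgO', v, ⟨hvV, hvO'⟩, h, hhH, rfl⟩
  have hhO : h ∈ O := hO' ⟨v⁻¹, hvO', v * h, hgO', by group⟩
  exact ⟨v, hvV, h, hO ⟨hhH, hhO⟩, rfl⟩

theorem nhds_one_le_of_induced_eq_of_coinduced_eq {σ ω : TopologicalSpace G}
    (hσ : @IsTopologicalGroup G σ _) (hω : @IsTopologicalGroup G ω _) (hσω : σ ≤ ω)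
    {H : Subgroup G}
    (hsub : ω.induced ((↑) : H → G) = σ.induced (↑))
    (hquot : ω.coinduced (QuotientGroup.mk : G → G ⧸ H) = σ.coinduced QuotientGroup.mk) :
    @nhds G ω 1 ≤ @nhds G σ 1 := by
  intro U hU
  obtain ⟨V, hVopen, hV1, hVV⟩ : ∃ V : Set G, IsOpen[σ] V ∧ (1 : G) ∈ V ∧ V * V ⊆ U := by
    let := σ; exact exists_open_nhds_one_mul_subset hU
  obtain ⟨O, hOopen, hOV⟩ := exists_isOpen_inter_eq_of_induced_eq hsub hVopen
  have hO1 : (1 : G) ∈ O := (hOV.symm ▸ ⟨H.one_mem, hV1⟩ : (1 : G) ∈ (H : Set G) ∩ O).2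
  obtain ⟨O', hO'open, hO'1, hO'O'⟩ : ∃ O' : Set G, IsOpen[ω] O' ∧ (1 : G) ∈ O' ∧
      O' * O' ⊆ O := by
    let := ω; exact exists_open_nhds_one_mul_subset (hOopen.mem_nhds hO1)
  have hSopen : IsOpen[σ] (V ∩ O'⁻¹) := by
    have hO'inv : IsOpen[ω] O'⁻¹ := by let := ω; exact hO'open.inv
    let := σ; exact hVopen.inter (hO'inv.mono hσω)
  have hSH : IsOpen[ω] ((V ∩ O'⁻¹) * H) := by
    let := σ
    rw [← isOpen_coinduced_mk_image_iff, hquot, isOpen_coinduced_mk_image_iff]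
    exact hSopen.mul_right
  have hN1 : (1 : G) ∈ O' ∩ ((V ∩ O'⁻¹) * H) :=
    ⟨hO'1, 1, ⟨hV1, by simpa using hO'1⟩, 1, H.one_mem, mul_one 1⟩
  let := ω
  exact Filter.mem_of_superset ((hO'open.inter hSH).mem_nhds hN1)
    ((inter_mul_subgroup_subset_mul (hOV.trans_subset Set.inter_subset_right) hO'O').trans hVV)

end Group

theorem stmt1_general {G : Type*} [Group G] (σ ω : TopologicalSpace G)
    (hσgrp : @IsTopologicalGroup G σ _)
    (hωgrp : @IsTopologicalGroup G ω _)
    (hcoarser : σ ≤ ω)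
    (H : Subgroup G)
    (hsub : TopologicalSpace.induced ((↑) : H → G) ω
      = TopologicalSpace.induced ((↑) : H → G) σ)
    (hquot : TopologicalSpace.coinduced (QuotientGroup.mk : G → G ⧸ H) ω
      = TopologicalSpace.coinduced (QuotientGroup.mk : G → G ⧸ H) σ) :
    ω = σ :=
  IsTopologicalGroup.ext hωgrp hσgrp <| le_antisymm
    (nhds_one_le_of_induced_eq_of_coinduced_eq hσgrp hωgrp hcoarser hsub hquot)
    (nhds_mono hcoarser)

/-- **Merson's Lemma.** Let `G` be a group carrying two Hausdorff group topologies
`ω ≤ σ` (`ω` coarser than `σ`). Suppose there is a subgroup `H ≤ G` such that the subspace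
topologies induced by `ω` and `σ` on `H` coincide, and the quotient topologies induced by `ω`
and `σ` on the coset space `G/H` coincide. Then `ω = σ`.

(In Mathlib's order on `TopologicalSpace G`, "`ω` is coarser than `σ`" is `σ ≤ ω`.) -/
theorem stmt1 {G : Type*} [Group G] (σ ω : TopologicalSpace G)
    (hσgrp : @IsTopologicalGroup G σ _) (hσt2 : @T2Space G σ)
    (hωgrp : @IsTopologicalGroup G ω _) (hωt2 : @T2Space G ω)
    (hcoarser : σ ≤ ω)
    (H : Subgroup G)
    (hsub : TopologicalSpace.induced ((↑) : H → G) ω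
      = TopologicalSpace.induced ((↑) : H → G) σ)
    (hquot : TopologicalSpace.coinduced (QuotientGroup.mk : G → G ⧸ H) ω
      = TopologicalSpace.coinduced (QuotientGroup.mk : G → G ⧸ H) σ) :
    ω = σ :=
  stmt1_general σ ω hσgrp hωgrp hcoarser H hsub hquot
end

section
/- Let k be a local field and V a finite-dimensional normed k-vector space. Let A = k* ⋉ V be the homothety group, i.e., the semidirect product of the multiplicative group k* of k acting on the additive group V by scalar multiplication, equipped with the product topology (the analytic topology). Then every Hausdorff group topology ω on A coarser than the analytic topology induces on the subgroup V (identified with {1} × V) the norm topology of V. -/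
/-- The homothety group `k* ⋉ V` of a vector space `V` over a field `k`: the underlying set is
`kˣ × V`. -/
def Homothety (k V : Type*) [NontriviallyNormedField k] [NormedAddCommGroup V]
    [NormedSpace k V] : Type _ := kˣ × V

namespace Homothety

variable {k V : Type*} [NontriviallyNormedField k] [NormedAddCommGroup V] [NormedSpace k V]

/-- Build an element of the homothety group from a scalar and a vector. -/
def mk (a : kˣ) (v : V) : Homothety k V := (a, v)

/-- Group structure on the homothety group: `(a, v) * (b, w) = (a * b, v + a • w)`. -/
instance : Group (Homothety k V) where
  mul p q := mk (p.1 * q.1) (p.2 + p.1 • q.2)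
  one := mk 1 0
  inv p := mk p.1⁻¹ (-(p.1⁻¹ • p.2))
  mul_assoc p q r := by
    show mk ((p.1 * q.1) * r.1) ((p.2 + p.1 • q.2) + (p.1 * q.1) • r.2)
      = mk (p.1 * (q.1 * r.1)) (p.2 + p.1 • (q.2 + q.1 • r.2))
    simp [mk, Prod.mk.injEq, mul_assoc, mul_smul, smul_add, add_assoc] <;> rfl
  one_mul p := by
    show mk (1 * p.1) (0 + (1 : kˣ) • p.2) = p
    simp [mk] <;> rfl
  mul_one p := by
    show mk (p.1 * 1) (p.2 + p.1 • (0 : V)) = p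
    simp [mk] <;> rfl
  inv_mul_cancel p := by
    show mk (p.1⁻¹ * p.1) (-(p.1⁻¹ • p.2) + p.1⁻¹ • p.2) = mk 1 0
    simp [mk] <;> rfl

/-- The analytic topology on the homothety group: the product topology of `kˣ × V`. -/
instance analyticTopology : TopologicalSpace (Homothety k V) :=
  inferInstanceAs (TopologicalSpace (kˣ × V))

end Homothety

/-!
Closed annuli `r ≤ ‖v‖ ≤ R` in `V` are compact (`V` is finite-dimensional over a locally compact
field), hence compact and closed for the Hausdorff topology `ω`. So an annulus can be cut out of
an `ω`-neighbourhood of `1`, and the induced topology is the norm topology as soon as some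
`ω`-neighbourhood of `1` is bounded on `{1} × V`. Boundedness comes from the commutator
`⁅(c, 0), (1, v)⁆ = (1, (c - 1) • v)`: when `‖v‖` is large, some `c` close to `1` puts it in a
fixed annulus, which `ω` separates from `1`; continuity of the commutator then keeps large `v` out
of a neighbourhood of `1`.
-/

open Filter Topology
open scoped commutatorElement

namespace Homothety

variable {k V : Type*} [NontriviallyNormedField k] [NormedAddCommGroup V] [NormedSpace k V]

theorem mk_mul (a b : kˣ) (v w : V) : mk a v * mk b w = mk (a * b) (v + a • w) := rfl

theorem mk_inv (a : kˣ) (v : V) : (mk a v)⁻¹ = mk a⁻¹ (-(a⁻¹ • v)) := rfl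

theorem one_def : (1 : Homothety k V) = mk 1 0 := rfl

theorem mk_one_injective : Function.Injective (mk (1 : kˣ) : V → Homothety k V) :=
  fun _ _ h => congrArg Prod.snd h

theorem inv_mk_one_mul_mk_one (v w : V) : (mk 1 w)⁻¹ * mk 1 v = mk (1 : kˣ) (v - w) := by
  simp [mk_inv, mk_mul, sub_eq_neg_add]

theorem commutatorElement_mk_zero_mk_one (c : kˣ) (v : V) :
    ⁅mk c (0 : V), mk 1 v⁆ = mk (1 : kˣ) (((c : k) - 1) • v) := by
  simp [commutatorElement_def, mk_inv, mk_mul, Units.smul_def, sub_eq_add_neg, add_smul]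

theorem continuous_mk_one : Continuous (fun v : V => mk (1 : kˣ) v) :=
  show Continuous (fun v : V => ((1 : kˣ), v)) from continuous_const.prodMk continuous_id

theorem continuous_mk_zero : Continuous (fun c : kˣ => mk c (0 : V)) :=
  show Continuous (fun c : kˣ => (c, (0 : V))) from continuous_id.prodMk continuous_const

theorem exists_norm_lt_smul_mem_annulus {a : k} (ha : 1 < ‖a‖) {ε : ℝ} (hε : 0 < ε) {v : V}
    (hv : ε⁻¹ < ‖v‖) :
    ∃ d : k, ‖d‖ < ε ∧ d • v ∈ Metric.closedBall (0 : V) 1 \ Metric.ball 0 ‖a‖⁻¹ := by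
  have hv0 : v ≠ 0 := norm_pos_iff.1 ((inv_pos.2 hε).trans hv)
  obtain ⟨d, -, hdv, hadv, -⟩ := rescale_to_shell ha one_pos hv0
  refine ⟨d, ?_, mem_closedBall_zero_iff.2 hdv.le, ?_⟩
  · rw [norm_smul] at hdv
    have : ‖d‖ * ε⁻¹ < 1 := (mul_le_mul_of_nonneg_left hv.le (norm_nonneg d)).trans_lt hdv
    rwa [mul_inv_lt_iff₀ hε, one_mul] at this
  · simpa [one_div] using hadv

section CoarserTopology

variable (ω : TopologicalSpace (Homothety k V)) (hcoarser : analyticTopology ≤ ω)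
include hcoarser

theorem continuous_mk_one_of_le : Continuous[_, ω] (fun v : V => mk (1 : kˣ) v) :=
  continuous_le_rng hcoarser continuous_mk_one

theorem continuous_mk_zero_of_le : Continuous[_, ω] (fun c : kˣ => mk c (0 : V)) :=
  continuous_le_rng hcoarser continuous_mk_zero

variable [@T2Space _ ω] [ProperSpace V]

theorem compl_image_mk_one_annulus_mem_nhds {r : ℝ} (hr : 0 < r) (R : ℝ) :
    (mk 1 '' (Metric.closedBall (0 : V) R \ Metric.ball 0 r))ᶜ ∈ @nhds _ ω 1 := by
  refine (((isCompact_closedBall 0 R).diff Metric.isOpen_ball).image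
    (continuous_mk_one_of_le ω hcoarser)).isClosed.compl_mem_nhds ?_
  rintro ⟨v, ⟨-, hvr⟩, hv⟩
  obtain rfl : v = 0 := mk_one_injective (hv.trans one_def)
  exact hvr (Metric.mem_ball_self hr)

variable [@IsTopologicalGroup _ ω _]

theorem exists_mem_nhds_one_isBounded_preimage_mk_one :
    ∃ U ∈ @nhds _ ω 1, Bornology.IsBounded (mk 1 ⁻¹' U : Set V) := by
  obtain ⟨a, ha⟩ := NormedField.exists_one_lt_norm k
  have hcomm : Tendsto (fun p : Homothety k V × Homothety k V => ⁅p.1, p.2⁆)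
      (@nhds _ ω 1 ×ˢ @nhds _ ω 1) (@nhds _ ω 1) := by
    have : Continuous (fun p : Homothety k V × Homothety k V => ⁅p.1, p.2⁆) := by
      simp only [commutatorElement_def]
      fun_prop
    simpa [nhds_prod_eq] using this.tendsto (1, 1)
  obtain ⟨U₁, hU₁, U₂, hU₂, hU⟩ := eventually_prod_iff.1
    (hcomm (compl_image_mk_one_annulus_mem_nhds ω hcoarser (inv_pos.2 (one_pos.trans ha)) 1))
  have hscalar : ∀ᶠ y in 𝓝 (1 : k), ∃ c : kˣ, (c : k) = y ∧ U₁ (mk c 0) := by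
    have h : ∀ᶠ c : kˣ in 𝓝 1, U₁ (mk c 0) := (continuous_mk_zero_of_le ω hcoarser).tendsto 1 hU₁
    rw [Units.isEmbedding_val₀.nhds_eq_comap, Units.val_one, eventually_comap] at h
    filter_upwards [h, eventually_ne_nhds one_ne_zero] with y hy hy0
    exact ⟨Units.mk0 y hy0, rfl, hy _ rfl⟩
  obtain ⟨ε, hε, hεU₁⟩ := Metric.eventually_nhds_iff.1 hscalar
  refine ⟨{x | U₂ x}, hU₂, isBounded_iff_forall_norm_le.2 ⟨ε⁻¹, fun v hv => ?_⟩⟩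
  by_contra! hvε
  obtain ⟨d, hd, hdv⟩ := exists_norm_lt_smul_mem_annulus ha hε hvε
  obtain ⟨c, hc, hcU₁⟩ := hεU₁ (y := 1 + d) (by simpa [dist_eq_norm] using hd)
  refine hU hcU₁ hv ⟨d • v, hdv, ?_⟩
  dsimp only
  rw [commutatorElement_mk_zero_mk_one, hc, add_sub_cancel_left]

theorem comap_mk_one_nhds_one_le : comap (mk 1) (@nhds _ ω 1) ≤ 𝓝 (0 : V) := by
  obtain ⟨U, hU, hUb⟩ := exists_mem_nhds_one_isBounded_preimage_mk_one ω hcoarser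
  obtain ⟨R, hR⟩ := hUb.subset_closedBall 0
  refine Metric.nhds_basis_ball.ge_iff.2 fun r hr => ?_
  refine ⟨U ∩ (mk 1 '' (Metric.closedBall 0 R \ Metric.ball 0 r))ᶜ,
    inter_mem hU (compl_image_mk_one_annulus_mem_nhds ω hcoarser hr R), ?_⟩
  rintro v ⟨hvU, hvK⟩
  by_contra hvr
  exact hvK ⟨v, ⟨hR hvU, hvr⟩, rfl⟩

theorem comap_mk_one_nhds_le (x : V) : comap (mk 1) (@nhds _ ω (mk 1 x)) ≤ 𝓝 x := by
  have hsub : Tendsto (fun v => mk (1 : kˣ) (v - x)) (comap (mk 1) (@nhds _ ω (mk 1 x)))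
      (@nhds _ ω 1) := by
    simpa [inv_mk_one_mul_mk_one] using
      (tendsto_comap : Tendsto (mk 1) _ (@nhds _ ω (mk 1 x))).const_mul (mk (1 : kˣ) x)⁻¹
  have h := ((tendsto_comap_iff.2 hsub).mono_right
    (comap_mk_one_nhds_one_le ω hcoarser)).add_const x
  simp only [sub_add_cancel, zero_add] at h
  exact tendsto_id'.1 h

end CoarserTopology

end Homothety

/-- Let `k` be a local field (a nontrivially normed field that is locally
compact) and `V` a finite-dimensional normed `k`-vector space. Let `A = k* ⋉ V` be the homothety
group with the product (analytic) topology. Then every Hausdorff group topology `ω` on `A`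
coarser than the analytic topology induces on the subgroup `V` (identified with `{1} × V` via
`v ↦ (1, v)`) the norm topology of `V`. -/
theorem stmt4 {k V : Type*} [NontriviallyNormedField k] [LocallyCompactSpace k]
    [NormedAddCommGroup V] [NormedSpace k V] [FiniteDimensional k V]
    (ω : TopologicalSpace (Homothety k V))
    (hωgrp : @IsTopologicalGroup (Homothety k V) ω _) (hωt2 : @T2Space (Homothety k V) ω)
    (hcoarser : Homothety.analyticTopology ≤ ω) :
    TopologicalSpace.induced (fun v : V => Homothety.mk 1 v) ω
      = (inferInstance : TopologicalSpace V) := by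
  have : ProperSpace V := FiniteDimensional.proper k V
  refine le_antisymm ((le_iff_nhds _ _).2 fun x => ?_) ?_
  · rw [nhds_induced]
    exact Homothety.comap_mk_one_nhds_le ω hcoarser x
  · exact continuous_iff_le_induced.1 (Homothety.continuous_mk_one_of_le ω hcoarser)
end

section
/- Let k be a local field. The projective general linear group PGL₂(k) = GL₂(k)/Z(GL₂(k)), endowed with the analytic topology (the quotient of the topology GL₂(k) inherits as a subspace of the 2×2 matrices over k), is a minimal topological group: it admits no strictly coarser Hausdorff group topology. -/
/-- The projective general linear group `PGL₂(k) = GL₂(k)/Z(GL₂(k))`. -/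
def PGL2 (k : Type*) [Field k] : Type _ :=
  GL (Fin 2) k ⧸ Subgroup.center (GL (Fin 2) k)

noncomputable instance (k : Type*) [Field k] : Group (PGL2 k) :=
  inferInstanceAs (Group (GL (Fin 2) k ⧸ Subgroup.center (GL (Fin 2) k)))

/-- The topology `GL₂(k)` inherits as a subspace of the `2 × 2` matrices over `k`. -/
def gl2Topology (k : Type*) [NontriviallyNormedField k] : TopologicalSpace (GL (Fin 2) k) :=
  TopologicalSpace.induced (Units.val : GL (Fin 2) k → Matrix (Fin 2) (Fin 2) k) inferInstance

/-- The analytic topology on `PGL₂(k)`: the quotient of the topology `GL₂(k)` inherits as a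
subspace of the `2 × 2` matrices over `k`. -/
def pgl2Topology (k : Type*) [NontriviallyNormedField k] : TopologicalSpace (PGL2 k) :=
  (gl2Topology k).coinduced
    (QuotientGroup.mk : GL (Fin 2) k → GL (Fin 2) k ⧸ Subgroup.center (GL (Fin 2) k))

/-!
Let `ω` be a coarser Hausdorff group topology. It suffices to find a set that is compact for the
analytic topology `τ` and is an `ω`-neighbourhood of `1`: on it the identity is a continuous
bijection from a compact space to a Hausdorff one, so `τ` and `ω` have the same neighbourhoods
of `1`.

Otherwise some ultrafilter converges to `1` for `ω` and escapes every `τ`-compact set. Move an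
entry of largest norm of a representative of `g` to the corner by row and column swaps (constant
along the ultrafilter) and divide by it: this writes `g` as `L(c) D(t) U(b)` with unipotent
`L(c)`, `U(b)`, `|c|, |b| ≤ 1`, and `D(t) = diag(1, t)`, and escaping forces `t → 0`. Along the
ultrafilter `L(c)` and `U(b)` converge, so `D(t)` converges for `ω` to some `d`, while
`D(t) L(1) D(t)⁻¹ = L(t) → 1`. Hence `d L(1) d⁻¹ = 1`, which is absurd as `L(1)` is not central.
-/

open Matrix Filter Topology

theorem Matrix.isEmbedding_unitsVal {n k : Type*} [Fintype n] [DecidableEq n] [Field k]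
    [TopologicalSpace k] [IsTopologicalDivisionRing k] :
    Topology.IsEmbedding (Units.val : (Matrix n n k)ˣ → Matrix n n k) := by
  refine Units.isEmbedding_val_mk' (f := Inv.inv) (fun A hA ↦ ?_) fun u ↦ (coe_units_inv u).symm
  refine (continuousAt_matrix_inv A ?_).continuousWithinAt
  rw [Ring.inverse_eq_inv']
  exact continuousAt_inv₀ ((isUnit_iff_isUnit_det A).1 hA).ne_zero

theorem Matrix.swap_mul_mul_swap_apply {n R : Type*} [Fintype n] [DecidableEq n] [CommRing R]
    (M : Matrix n n R) (i j i' j' a b : n) :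
    (swap R i j * M * swap R i' j') a b = M (Equiv.swap i j a) (Equiv.swap i' j' b) := by
  simp [swap, PEquiv.toMatrix_toPEquiv_mul, PEquiv.mul_toMatrix_toPEquiv]

theorem Matrix.GeneralLinearGroup.isCompact_setOf_norm_le_one_le_norm_det
    {n k : Type*} [Fintype n] [DecidableEq n] [NontriviallyNormedField k] [ProperSpace k]
    {ε : ℝ} (hε : 0 < ε) :
    IsCompact {v : GL n k | (∀ a b, ‖v a b‖ ≤ 1) ∧ ε ≤ ‖v.val.det‖} := by
  rw [Matrix.isEmbedding_unitsVal.isCompact_iff]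
  have himage : Units.val '' {v : GL n k | (∀ a b, ‖v a b‖ ≤ 1) ∧ ε ≤ ‖v.val.det‖} =
      {A : Matrix n n k | (∀ a b, ‖A a b‖ ≤ 1) ∧ ε ≤ ‖A.det‖} := by
    ext A
    refine ⟨?_, fun hA ↦ ⟨mkOfDetNeZero A ?_, hA, rfl⟩⟩
    · rintro ⟨v, hv, rfl⟩
      exact hv
    · rintro hdet
      simp [hdet, hε.not_ge] at hA
  rw [himage]
  refine (isCompact_univ_pi fun _ ↦ isCompact_univ_pi fun _ ↦ isCompact_closedBall (0 : k) 1)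
    |>.of_isClosed_subset ?_ fun A hA ↦ by simpa using hA.1
  simp only [Set.ofPred_and, Set.ofPred_forall]
  exact (isClosed_iInter fun a ↦ isClosed_iInter fun b ↦ isClosed_le (by fun_prop)
    continuous_const).inter (isClosed_le continuous_const (by fun_prop))

theorem Ultrafilter.exists_tendsto_of_forall_norm_le {ι E : Type*} [SeminormedAddCommGroup E]
    [ProperSpace E] (𝒰 : Ultrafilter ι) {f : ι → E} {r : ℝ} (hf : ∀ i, ‖f i‖ ≤ r) :
    ∃ x, Tendsto f 𝒰 (𝓝 x) := by
  obtain ⟨x, -, hx⟩ := (isCompact_closedBall (0 : E) r).ultrafilter_le_nhds (𝒰.map f) <| by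
    rw [coe_map]
    exact tendsto_principal.2 (.of_forall fun i ↦ mem_closedBall_zero_iff.2 (hf i))
  exact ⟨x, hx⟩

theorem IsTopologicalGroup.eq_of_le_of_disjoint_nhds_one_cocompact {G : Type*} [Group G]
    {τ ω : TopologicalSpace G} (hτ : @IsTopologicalGroup G τ _) (hω : @IsTopologicalGroup G ω _)
    (hω₂ : @T2Space G ω) (hle : τ ≤ ω) (h : Disjoint (@nhds G ω 1) (@cocompact G τ)) : ω = τ := by
  obtain ⟨C, hC1, hC⟩ := (@disjoint_cocompact_right G τ _).1 h
  refine hω.ext hτ (le_antisymm (fun U hU ↦ ?_) (nhds_mono hle))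
  obtain ⟨O, hOU, hO, h1O⟩ := (@mem_nhds_iff G τ _ _).1 hU
  have hF : IsClosed[ω] (C \ O) := by
    have := @IsCompact.image G G τ ω _ id (@IsCompact.diff G τ _ _ hC hO) (continuous_id_of_le hle)
    rw [Set.image_id] at this
    exact @IsCompact.isClosed G ω hω₂ _ this
  filter_upwards [hC1, @IsOpen.mem_nhds G ω _ _ hF.isOpen_compl fun h ↦ h.2 h1O] with g hgC hgF
  exact hOU (by_contra fun hgO ↦ hgF ⟨hgC, hgO⟩)

theorem gl2Topology_eq_units (k : Type*) [NontriviallyNormedField k] :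
    gl2Topology k = Units.instTopologicalSpaceUnits :=
  Matrix.isEmbedding_unitsVal.eq_induced.symm

namespace GL2

variable {k : Type*} [Field k]

def lower (c : k) : GL (Fin 2) k := GeneralLinearGroup.mkOfDetNeZero !![1, 0; c, 1] (by simp)

def upper (b : k) : GL (Fin 2) k := GeneralLinearGroup.mkOfDetNeZero !![1, b; 0, 1] (by simp)

def torus (t : kˣ) : GL (Fin 2) k := GeneralLinearGroup.mkOfDetNeZero !![1, 0; 0, (t : k)] (by simp)

theorem lower_zero : lower (0 : k) = 1 := by
  ext i j
  fin_cases i <;> fin_cases j <;> simp [lower]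

theorem torus_mul_lower (t : kˣ) (c : k) : torus t * lower c = lower (t * c) * torus t := by
  ext i j
  fin_cases i <;> fin_cases j <;> simp [lower, torus]

theorem eq_lower_mul_torus_mul_upper (v : GL (Fin 2) k) (hv : v 0 0 = 1) :
    v = lower (v 1 0) * torus (GeneralLinearGroup.det v) * upper (v 0 1) := by
  ext i j
  fin_cases i <;> fin_cases j <;> simp [lower, torus, upper, det_fin_two, hv]
  ring

theorem lower_one_notMem_center : lower (1 : k) ∉ Subgroup.center (GL (Fin 2) k) := by
  intro h
  have h00 := congrArg (fun g : GL (Fin 2) k ↦ g 0 0) (Subgroup.mem_center_iff.1 h (upper 1))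
  simp [lower, upper] at h00

end GL2

namespace PGL2

section Algebra

variable {k : Type*} [Field k]

def mk : GL (Fin 2) k →* PGL2 k := QuotientGroup.mk' _

theorem mk_surjective : Function.Surjective (mk : GL (Fin 2) k → PGL2 k) :=
  QuotientGroup.mk'_surjective _

theorem mk_eq_one_iff {g : GL (Fin 2) k} : mk g = 1 ↔ g ∈ Subgroup.center (GL (Fin 2) k) :=
  QuotientGroup.eq_one_iff g

theorem mk_scalar (a : kˣ) : mk (GeneralLinearGroup.scalar (Fin 2) a) = 1 := by
  rw [mk_eq_one_iff, GeneralLinearGroup.center_eq_range_scalar]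
  exact ⟨a, rfl⟩

end Algebra

section Normalize

variable {k : Type*} [NontriviallyNormedField k]

/-- Moving an entry of maximal norm to the corner and dividing by it. -/
theorem exists_mk_swap_mul_mul_swap_eq (u : GL (Fin 2) k) :
    ∃ (i j : Fin 2) (v : GL (Fin 2) k), v 0 0 = 1 ∧ (∀ a b, ‖v a b‖ ≤ 1) ∧
      mk (GeneralLinearGroup.swap k 0 i) * mk u * mk (GeneralLinearGroup.swap k 0 j) = mk v := by
  obtain ⟨⟨i, j⟩, hmax⟩ := Finite.exists_max fun p : Fin 2 × Fin 2 ↦ ‖u p.1 p.2‖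
  have hne : u i j ≠ 0 := by
    intro h
    refine u.ne_zero (Matrix.ext fun a b ↦ norm_le_zero_iff.1 ?_)
    simpa [h] using hmax (a, b)
  set v := GeneralLinearGroup.scalar (Fin 2) (Units.mk0 _ hne)⁻¹ *
    (GeneralLinearGroup.swap k 0 i * u * GeneralLinearGroup.swap k 0 j)
  have hv : ∀ a b, v a b = (u i j)⁻¹ * u (Equiv.swap 0 i a) (Equiv.swap 0 j b) := by
    intro a b
    simp only [v, Units.val_mul, GeneralLinearGroup.coe_scalar, scalar_apply, diagonal_mul,
      GeneralLinearGroup.val_swap, swap_mul_mul_swap_apply, Units.val_inv_eq_inv_val, Units.val_mk0]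
  refine ⟨i, j, v, by simp [hv, hne], fun a b ↦ ?_, ?_⟩
  · rw [hv, norm_mul, norm_inv, inv_mul_le_one₀ (norm_pos_iff.2 hne)]
    exact hmax (_, _)
  · rw [map_mul, mk_scalar, one_mul, map_mul, map_mul]

end Normalize

section AnalyticTopology

variable {k : Type*} [NontriviallyNormedField k]

attribute [local instance] pgl2Topology

theorem pgl2Topology_eq_quotient :
    pgl2Topology k = (inferInstance : TopologicalSpace (GL (Fin 2) k ⧸ Subgroup.center _)) := by
  rw [pgl2Topology, gl2Topology_eq_units]
  rfl

theorem isTopologicalGroup_pgl2Topology : IsTopologicalGroup (PGL2 k) := by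
  rw [pgl2Topology_eq_quotient]
  exact inferInstanceAs (IsTopologicalGroup (GL (Fin 2) k ⧸ Subgroup.center _))

attribute [local instance] isTopologicalGroup_pgl2Topology

theorem continuous_mk : Continuous (mk : GL (Fin 2) k → PGL2 k) := by
  rw [pgl2Topology_eq_quotient]
  exact continuous_quot_mk

theorem continuous_mk_lower : Continuous fun c : k ↦ mk (GL2.lower c) :=
  continuous_mk.comp <| isEmbedding_unitsVal.continuous_iff.2 <| by
    simp only [GL2.lower, Function.comp_def, GeneralLinearGroup.val_mkOfDetNeZero]
    fun_prop

theorem continuous_mk_upper : Continuous fun b : k ↦ mk (GL2.upper b) :=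
  continuous_mk.comp <| isEmbedding_unitsVal.continuous_iff.2 <| by
    simp only [GL2.upper, Function.comp_def, GeneralLinearGroup.val_mkOfDetNeZero]
    fun_prop

theorem tendsto_mul_mul_cocompact (x y : PGL2 k) :
    Tendsto (fun g ↦ x * g * y) (cocompact (PGL2 k)) (cocompact (PGL2 k)) :=
  ((Homeomorph.mulLeft x).trans (Homeomorph.mulRight y)).map_cocompact.le

theorem tendsto_det_zero_of_tendsto_cocompact [ProperSpace k] {ι : Type*} {l : Filter ι}
    {v : ι → GL (Fin 2) k} (hv : ∀ i a b, ‖v i a b‖ ≤ 1)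
    (hesc : Tendsto (fun i ↦ mk (v i)) l (cocompact (PGL2 k))) :
    Tendsto (fun i ↦ (v i).val.det) l (𝓝 0) := by
  refine NormedAddGroup.tendsto_nhds_zero.2 fun ε hε ↦ ?_
  have hK := (GeneralLinearGroup.isCompact_setOf_norm_le_one_le_norm_det
    (n := Fin 2) (k := k) hε).image continuous_mk
  filter_upwards [hesc hK.compl_mem_cocompact] with i hi
  by_contra! hdet
  exact hi ⟨v i, ⟨hv i, hdet⟩, rfl⟩

end AnalyticTopology

section CoarserTopology

variable {k : Type*} [NontriviallyNormedField k] [ProperSpace k] [TopologicalSpace (PGL2 k)]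
  [IsTopologicalGroup (PGL2 k)] [T2Space (PGL2 k)]

theorem not_tendsto_mk_of_tendsto_det_zero (hτ : pgl2Topology k ≤ ‹_›) {ι : Type*}
    (𝒰 : Ultrafilter ι) {v : ι → GL (Fin 2) k} (hv₀₀ : ∀ i, v i 0 0 = 1)
    (hv : ∀ i a b, ‖v i a b‖ ≤ 1) (hdet : Tendsto (fun i ↦ (v i).val.det) 𝒰 (𝓝 0))
    (q : PGL2 k) : ¬Tendsto (fun i ↦ mk (v i)) 𝒰 (𝓝 q) := by
  intro hq
  have hL := continuous_le_rng hτ continuous_mk_lower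
  have hU := continuous_le_rng hτ continuous_mk_upper
  obtain ⟨c, hc⟩ := 𝒰.exists_tendsto_of_forall_norm_le fun i ↦ hv i 1 0
  obtain ⟨b, hb⟩ := 𝒰.exists_tendsto_of_forall_norm_le fun i ↦ hv i 0 1
  set t := fun i ↦ GeneralLinearGroup.det (v i)
  have htorus : Tendsto (fun i ↦ mk (GL2.torus (t i))) 𝒰
      (𝓝 ((mk (GL2.lower c))⁻¹ * q * (mk (GL2.upper b))⁻¹)) := by
    refine ((((hL.tendsto c).comp hc).inv.mul hq).mul ((hU.tendsto b).comp hb).inv).congr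
      fun i ↦ ?_
    have hfac : mk (v i) =
        mk (GL2.lower (v i 1 0)) * mk (GL2.torus (t i)) * mk (GL2.upper (v i 0 1)) := by
      rw [← map_mul, ← map_mul, ← GL2.eq_lower_mul_torus_mul_upper (v i) (hv₀₀ i)]
    simp only [Function.comp_apply, hfac]
    group
  have hconj : Tendsto
      (fun i ↦ mk (GL2.torus (t i)) * mk (GL2.lower 1) * (mk (GL2.torus (t i)))⁻¹) 𝒰 (𝓝 1) := by
    have := (hL.tendsto 0).comp hdet
    rw [GL2.lower_zero, map_one] at this
    refine this.congr fun i ↦ ?_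
    rw [← map_mul, GL2.torus_mul_lower, map_mul, mul_inv_cancel_right, mul_one]
    rfl
  have hone := tendsto_nhds_unique ((htorus.mul tendsto_const_nhds).mul htorus.inv) hconj
  exact GL2.lower_one_notMem_center (mk_eq_one_iff.1 (conj_eq_one_iff.1 hone))

theorem disjoint_nhds_one_cocompact (hτ : pgl2Topology k ≤ ‹_›) :
    Disjoint (𝓝 (1 : PGL2 k)) (@cocompact _ (pgl2Topology k)) := by
  rw [disjoint_iff]
  by_contra hne
  have : NeBot (𝓝 (1 : PGL2 k) ⊓ @cocompact _ (pgl2Topology k)) := ⟨hne⟩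
  obtain ⟨𝒰, h𝒰⟩ := Ultrafilter.exists_le (𝓝 (1 : PGL2 k) ⊓ @cocompact _ (pgl2Topology k))
  choose u hu using mk_surjective (k := k)
  choose i j v hv₀₀ hv hmk using fun g ↦ exists_mk_swap_mul_mul_swap_eq (u g)
  obtain ⟨⟨I, J⟩, hIJ⟩ := (𝒰.map fun g ↦ (i g, j g)).eq_pure_of_finite
  set x := mk (GeneralLinearGroup.swap k 0 I)
  set y := mk (GeneralLinearGroup.swap k 0 J)
  have heq : ∀ᶠ g in 𝒰, x * g * y = mk (v g) := by
    have hIJ' : ∀ᶠ g in 𝒰, (i g, j g) = (I, J) := Ultrafilter.mem_map.1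
      (hIJ ▸ Ultrafilter.mem_pure.2 rfl : {(I, J)} ∈ 𝒰.map fun g ↦ (i g, j g))
    filter_upwards [hIJ'] with g hg
    obtain ⟨rfl, rfl⟩ := Prod.mk.inj hg
    rw [← hmk, hu]
  refine not_tendsto_mk_of_tendsto_det_zero hτ 𝒰 hv₀₀ hv
    (tendsto_det_zero_of_tendsto_cocompact hv (((tendsto_mul_mul_cocompact x y).comp
      (h𝒰.trans inf_le_right)).congr' heq)) (x * 1 * y) ?_
  exact (((tendsto_const_nhds.mul (h𝒰.trans inf_le_left)).mul tendsto_const_nhds).congr' heq)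

end CoarserTopology

end PGL2

/-- Let `k` be a local field (a nontrivially normed field that is locally
compact). The group `PGL₂(k)`, endowed with the analytic topology, is a minimal topological
group: it admits no strictly coarser Hausdorff group topology. -/
theorem stmt7 (k : Type*) [NontriviallyNormedField k] [LocallyCompactSpace k]
    (ω : TopologicalSpace (PGL2 k))
    (hωgrp : @IsTopologicalGroup (PGL2 k) ω _) (hωt2 : @T2Space (PGL2 k) ω)
    (hcoarser : pgl2Topology k ≤ ω) :
    ω = pgl2Topology k := by
  have : ProperSpace k := .of_nontriviallyNormedField_of_weaklyLocallyCompactSpace k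
  exact IsTopologicalGroup.eq_of_le_of_disjoint_nhds_one_cocompact
    PGL2.isTopologicalGroup_pgl2Topology hωgrp hωt2 hcoarser
    (PGL2.disjoint_nhds_one_cocompact hcoarser)
end

section
/- Let L be a group acting faithfully by automorphisms on an abelian group A, and let G = L ⋉ A be the corresponding semidirect product. Then every nontrivial normal subgroup M of G intersects A nontrivially, i.e., M ∩ A ≠ {e} (identifying A with the subgroup {e} × A of G). -/
/-- Let `L` be a group acting faithfully by automorphisms on an abelian group
`A` (the action is given by an injective homomorphism `φ : L →* MulAut A`), and let
`G = L ⋉ A` be the corresponding semidirect product. Then every nontrivial normal subgroup `M`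
of `G` intersects `A` nontrivially (identifying `A` with its canonical image in `G`). -/
theorem stmt9 {L A : Type*} [Group L] [CommGroup A]
    (φ : L →* MulAut A) (hfaithful : Function.Injective φ)
    (M : Subgroup (A ⋊[φ] L)) (hM : M.Normal) (hMnontriv : M ≠ ⊥) :
    M ⊓ (SemidirectProduct.inl : A →* A ⋊[φ] L).range ≠ ⊥ := by
  intro h
  apply hMnontriv
  have hbot : ∀ a : A, SemidirectProduct.inl (φ := φ) a ∈ M → a = 1 := by
    intro a ha
    have : SemidirectProduct.inl (φ := φ) a ∈ (⊥ : Subgroup (A ⋊[φ] L)) := by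
      rw [← h]; exact ⟨ha, ⟨a, rfl⟩⟩
    have := Subgroup.mem_bot.mp this
    simpa using congrArg SemidirectProduct.left this
  rw [Subgroup.eq_bot_iff_forall]
  intro g hg
  obtain ⟨a, l⟩ := g
  have hl : l = 1 := by
    apply hfaithful
    rw [map_one]
    ext b
    have h1 : SemidirectProduct.inl (φ := φ) b * ⟨a, l⟩ *
        (SemidirectProduct.inl (φ := φ) b)⁻¹ * (⟨a, l⟩ : A ⋊[φ] L)⁻¹ ∈ M :=
      M.mul_mem (hM.conj_mem _ hg _) (M.inv_mem hg)
    have h2 : SemidirectProduct.inl (φ := φ) b * ⟨a, l⟩ *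
        (SemidirectProduct.inl (φ := φ) b)⁻¹ * (⟨a, l⟩ : A ⋊[φ] L)⁻¹ =
        SemidirectProduct.inl (φ := φ) (b * φ l b⁻¹) := by
      ext <;> simp [mul_comm, mul_assoc, mul_left_comm]
    rw [h2] at h1
    have := hbot _ h1
    have : φ l b⁻¹ = b⁻¹ := by
      have := mul_eq_one_iff_inv_eq.mp this
      simpa using this.symm
    simpa using congrArg (·⁻¹) this
  subst hl
  have : (⟨a, 1⟩ : A ⋊[φ] L) = SemidirectProduct.inl a := rfl
  rw [this] at hg
  rw [this, hbot a hg, map_one]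
end

section
/- Let k be a local field and let V be a finite-dimensional k-vector space carrying a linear representation of a group L that is faithful and irreducible (V ≠ 0 and V has no L-invariant k-subspace other than 0 and V). Let N ≤ V be an L-invariant additive subgroup with N ≠ V. Then the induced action of L on the quotient group V/N is faithful: for every l ∈ L with l ≠ e, there exists v ∈ V with l·v − v ∉ N. -/
/-- Let `k` be a local field (a nontrivially normed field that is locally
compact) and let `V` be a finite-dimensional `k`-vector space carrying a linear representation
of a group `L` that is faithful and irreducible. Let `N ≤ V` be an `L`-invariant additive
subgroup with `N ≠ V`. Then the induced action of `L` on the quotient `V/N` is faithful: for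
every `l ∈ L` with `l ≠ 1` there exists `v ∈ V` with `l • v - v ∉ N`. -/
theorem stmt10 {k : Type*} [NontriviallyNormedField k] [LocallyCompactSpace k]
    {V : Type*} [AddCommGroup V] [Module k V] [FiniteDimensional k V] [Nontrivial V]
    {L : Type*} [Group L] [DistribMulAction L V] [SMulCommClass k L V]
    (hfaithful : ∀ l : L, (∀ v : V, l • v = v) → l = 1)
    (hirred : ∀ W : Submodule k V, (∀ (l : L), ∀ v ∈ W, l • v ∈ W) → W = ⊥ ∨ W = ⊤)
    (N : AddSubgroup V)
    (hNinv : ∀ (l : L), ∀ v ∈ N, l • v ∈ N)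
    (hNne : N ≠ ⊤) :
    ∀ l : L, l ≠ 1 → ∃ v : V, l • v - v ∉ N := by
  intro l hl
  by_contra h
  push_neg at h
  -- W : largest k-submodule contained in N
  set W : Submodule k V :=
    { carrier := {v | ∀ c : k, c • v ∈ N}
      zero_mem' := by intro c; simpa using N.zero_mem
      add_mem' := by
        intro a b ha hb c
        rw [smul_add]
        exact N.add_mem (ha c) (hb c)
      smul_mem' := by
        intro c v hv c'
        rw [smul_smul]
        exact hv _ } with hW
  have hWinv : ∀ (l' : L), ∀ v ∈ W, l' • v ∈ W := by
    intro l' v hv c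
    rw [smul_comm c l' v]
    exact hNinv l' _ (hv c)
  rcases hirred W hWinv with hbot | htop
  · apply hl
    apply hfaithful
    intro v
    have hv : l • v - v ∈ W := by
      intro c
      have := h (c • v)
      rwa [← smul_comm c l v, ← smul_sub] at this
    rw [hbot] at hv
    exact sub_eq_zero.mp ((Submodule.mem_bot (R := k)).mp hv)
  · apply hNne
    rw [eq_top_iff]
    intro v _
    have : (1 : k) • v ∈ N := by
      have : v ∈ W := htop ▸ Submodule.mem_top
      exact this 1
    simpa using this
end

section
/- Let k be a local field, let V be a finite-dimensional k-vector space carrying a linear representation of a group L that is faithful and irreducible, and set G = L ⋉ V, the semidirect product of L acting on the additive group of V. Then every normal subgroup M of G is either contained in V or contains V (identifying V with the subgroup {e} × V of G). -/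
/-- The semidirect product `L ⋉ V` of a group `L` acting by automorphisms on the additive
group of `V`: the underlying set is `L × V`. -/
def Sdp (L V : Type*) [Group L] [AddCommGroup V] [DistribMulAction L V] : Type _ := L × V

namespace Sdp

variable {L V : Type*} [Group L] [AddCommGroup V] [DistribMulAction L V]

/-- Build an element of `L ⋉ V` from a group element and a vector. -/
def mk (l : L) (v : V) : Sdp L V := (l, v)

/-- Group structure on `L ⋉ V`: `(l, v) * (l', v') = (l * l', v + l • v')`. -/
instance : Group (Sdp L V) where
  mul p q := mk (p.1 * q.1) (p.2 + p.1 • q.2)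
  one := mk 1 0
  inv p := mk p.1⁻¹ (-(p.1⁻¹ • p.2))
  mul_assoc p q r := by
    show mk ((p.1 * q.1) * r.1) ((p.2 + p.1 • q.2) + (p.1 * q.1) • r.2)
      = mk (p.1 * (q.1 * r.1)) (p.2 + p.1 • (q.2 + q.1 • r.2))
    simp [mk, Prod.mk.injEq, mul_assoc, mul_smul, smul_add, add_assoc]
    rfl
  one_mul p := by
    show mk (1 * p.1) (0 + (1 : L) • p.2) = p
    simp [mk]
    rfl
  mul_one p := by
    show mk (p.1 * 1) (p.2 + p.1 • (0 : V)) = p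
    simp [mk]
    rfl
  inv_mul_cancel p := by
    show mk (p.1⁻¹ * p.1) (-(p.1⁻¹ • p.2) + p.1⁻¹ • p.2) = mk 1 0
    simp [mk]
    rfl

/-- The copy `{1} × V` of the additive group `V` inside `L ⋉ V`. -/
def vsub : Subgroup (Sdp L V) where
  carrier := {p | p.1 = 1}
  one_mem' := rfl
  mul_mem' := by
    intro p q hp hq
    simp only [Set.mem_setOf_eq] at hp hq
    show p.1 * q.1 = 1
    rw [hp, hq, one_mul]
  inv_mem' := by
    intro p hp
    simp only [Set.mem_setOf_eq] at hp
    show p.1⁻¹ = 1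
    rw [hp, inv_one]

end Sdp

/-!
If `M` contains an element `p` with nontrivial `L`-component `l`, then `M` contains the commutators
`⁅p, (1, w)⁆ = (1, l • w - w)`. The vectors `v` with `(1, c • v) ∈ M` for all scalars `c` form an
`L`-invariant subspace (normality gives invariance under conjugation by `(g, 0)`); it contains every
`l • w - w`, so it is nonzero by faithfulness and hence all of `V` by irreducibility.
-/

open scoped commutatorElement

namespace Sdp

variable {L V : Type*} [Group L] [AddCommGroup V] [DistribMulAction L V]

@[simp] lemma mul_fst (p q : Sdp L V) : (p * q).1 = p.1 * q.1 := rfl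
@[simp] lemma mul_snd (p q : Sdp L V) : (p * q).2 = p.2 + p.1 • q.2 := rfl
@[simp] lemma inv_fst (p : Sdp L V) : p⁻¹.1 = p.1⁻¹ := rfl
@[simp] lemma inv_snd (p : Sdp L V) : p⁻¹.2 = -(p.1⁻¹ • p.2) := rfl
@[simp] lemma mk_fst (l : L) (v : V) : (mk l v).1 = l := rfl
@[simp] lemma mk_snd (l : L) (v : V) : (mk l v).2 = v := rfl

lemma one_eq_mk : (1 : Sdp L V) = mk 1 0 := rfl

@[ext] lemma ext {p q : Sdp L V} (h₁ : p.1 = q.1) (h₂ : p.2 = q.2) : p = q := Prod.ext h₁ h₂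

lemma mem_vsub {p : Sdp L V} : p ∈ vsub ↔ p.1 = 1 := Iff.rfl

lemma mk_one_mul_mk_one (x y : V) : mk (1 : L) x * mk 1 y = mk 1 (x + y) := by
  ext <;> simp

lemma conj_mk_one (g : L) (v : V) : mk g 0 * mk 1 v * (mk g 0)⁻¹ = mk 1 (g • v) := by
  ext <;> simp

lemma commutatorElement_mk_one (p : Sdp L V) (w : V) : ⁅p, mk (1 : L) w⁆ = mk 1 (p.1 • w - w) := by
  ext <;> simp [commutatorElement_def, sub_eq_add_neg]

lemma vsub_le_iff {M : Subgroup (Sdp L V)} : vsub ≤ M ↔ ∀ v : V, mk 1 v ∈ M :=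
  ⟨fun h v ↦ h (mem_vsub.2 rfl), fun h p hp ↦ by
    rw [show p = mk 1 p.2 from ext (mem_vsub.1 hp) rfl]
    exact h p.2⟩

/-- The largest subspace `W` of `V` with `{1} × W ≤ M`. -/
def vectorSubmodule (k : Type*) [Semiring k] [Module k V] (M : Subgroup (Sdp L V)) :
    Submodule k V where
  carrier := {v | ∀ c : k, mk 1 (c • v) ∈ M}
  zero_mem' _ := by simp [← one_eq_mk]
  add_mem' hx hy c := by simpa [smul_add, mk_one_mul_mk_one] using M.mul_mem (hx c) (hy c)
  smul_mem' d _ hv c := by simpa [mul_smul] using hv (c * d)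

variable {k : Type*} [Semiring k] [Module k V] [SMulCommClass k L V]
  {M : Subgroup (Sdp L V)}

lemma smul_mem_vectorSubmodule (hM : M.Normal) (g : L) {v : V}
    (hv : v ∈ vectorSubmodule k M) : g • v ∈ vectorSubmodule k M := fun c ↦ by
  simpa [smul_comm c g v, conj_mk_one] using hM.conj_mem _ (hv c) (mk g 0)

lemma smul_sub_mem_vectorSubmodule (hM : M.Normal) {p : Sdp L V} (hp : p ∈ M) (w : V) :
    p.1 • w - w ∈ vectorSubmodule k M := fun c ↦ by
  have hcomm : ⁅p, mk (1 : L) (c • w)⁆ ∈ M := by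
    rw [commutatorElement_def, mul_assoc p, mul_assoc p]
    exact M.mul_mem hp (hM.conj_mem _ (M.inv_mem hp) _)
  simpa [commutatorElement_mk_one, smul_sub, smul_comm c p.1 w] using hcomm

theorem le_vsub_or_vsub_le (hfaithful : ∀ l : L, (∀ v : V, l • v = v) → l = 1)
    (hirred : ∀ W : Submodule k V, (∀ (l : L), ∀ v ∈ W, l • v ∈ W) → W = ⊥ ∨ W = ⊤)
    (hM : M.Normal) : M ≤ vsub ∨ vsub ≤ M := by
  refine or_iff_not_imp_left.2 fun hMV ↦ ?_
  obtain ⟨p, hpM, hp⟩ := SetLike.not_le_iff_exists.1 hMV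
  have hW_ne_bot : vectorSubmodule k M ≠ ⊥ := fun hbot ↦ hp <| hfaithful _ fun w ↦
    sub_eq_zero.1 <| (Submodule.mem_bot k).1 (hbot ▸ smul_sub_mem_vectorSubmodule hM hpM w)
  have hW_top := (hirred _ fun g _ ↦ smul_mem_vectorSubmodule hM g).resolve_left hW_ne_bot
  refine vsub_le_iff.2 fun v ↦ ?_
  simpa using (hW_top ▸ Submodule.mem_top : v ∈ vectorSubmodule k M) 1

end Sdp

theorem stmt11_general {k : Type*} [NontriviallyNormedField k]
    {V : Type*} [AddCommGroup V] [Module k V]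
    {L : Type*} [Group L] [DistribMulAction L V] [SMulCommClass k L V]
    (hfaithful : ∀ l : L, (∀ v : V, l • v = v) → l = 1)
    (hirred : ∀ W : Submodule k V, (∀ (l : L), ∀ v ∈ W, l • v ∈ W) → W = ⊥ ∨ W = ⊤)
    (M : Subgroup (Sdp L V)) (hM : M.Normal) :
    M ≤ Sdp.vsub ∨ Sdp.vsub ≤ M :=
  Sdp.le_vsub_or_vsub_le hfaithful hirred hM

/-- Let `k` be a local field (a nontrivially normed field that is locally
compact), let `V` be a finite-dimensional `k`-vector space carrying a linear representation of
a group `L` that is faithful and irreducible, and set `G = L ⋉ V`. Then every normal subgroup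
`M` of `G` is either contained in `V` or contains `V` (identifying `V` with `{1} × V ≤ G`). -/
theorem stmt11 {k : Type*} [NontriviallyNormedField k] [LocallyCompactSpace k]
    {V : Type*} [AddCommGroup V] [Module k V] [FiniteDimensional k V] [Nontrivial V]
    {L : Type*} [Group L] [DistribMulAction L V] [SMulCommClass k L V]
    (hfaithful : ∀ l : L, (∀ v : V, l • v = v) → l = 1)
    (hirred : ∀ W : Submodule k V, (∀ (l : L), ∀ v ∈ W, l • v ∈ W) → W = ⊥ ∨ W = ⊤)
    (M : Subgroup (Sdp L V)) (hM : M.Normal) :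
    M ≤ Sdp.vsub ∨ Sdp.vsub ≤ M :=
  stmt11_general hfaithful hirred M hM
end

section
/- Let p be a prime and let V = ℚ_p^n be an n-dimensional vector space over the field ℚ_p of p-adic numbers, with its standard topology. Then every closed additive subgroup N ≤ V which contains no nonzero ℚ_p-linear subspace of V is compact. -/
/-- A closed additive subgroup of `ℚ_p ^ n` is stable under scalars of norm at most `1`. -/
lemma stmt12_stab (p : ℕ) [Fact p.Prime] (n : ℕ)
    (N : AddSubgroup (Fin n → ℚ_[p]))
    (hclosed : IsClosed (N : Set (Fin n → ℚ_[p])))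
    (x : Fin n → ℚ_[p]) (hx : x ∈ N) (c : ℚ_[p]) (hc : ‖c‖ ≤ 1) : c • x ∈ N := by
  have key : ∀ z : ℤ_[p], (z : ℚ_[p]) • x ∈ N := by
    intro z
    refine PadicInt.denseRange_intCast.induction_on z ?_ ?_
    · have hcont : Continuous (fun z : ℤ_[p] => (z : ℚ_[p])) :=
        (show Isometry (fun z : ℤ_[p] => (z : ℚ_[p])) from fun _ _ => rfl).continuous
      exact IsClosed.preimage (hcont.smul continuous_const) hclosed
    · intro a
      have : ((a : ℤ_[p]) : ℚ_[p]) • x = a • x := by push_cast; exact Int.cast_smul_eq_zsmul _ a x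
      show ((a : ℤ_[p]) : ℚ_[p]) • x ∈ N
      rw [this]
      exact zsmul_mem hx a
  exact key ⟨c, hc⟩

/-- Let `p` be a prime and let `V = ℚ_p ^ n` with its standard topology.
Then every closed additive subgroup `N ≤ V` which contains no nonzero `ℚ_p`-linear subspace of
`V` is compact. -/
theorem stmt12 (p : ℕ) [Fact p.Prime] (n : ℕ)
    (N : AddSubgroup (Fin n → ℚ_[p]))
    (hclosed : IsClosed (N : Set (Fin n → ℚ_[p])))
    (hnosub : ∀ W : Submodule ℚ_[p] (Fin n → ℚ_[p]), (W : Set (Fin n → ℚ_[p])) ⊆ N → W = ⊥) :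
    IsCompact (N : Set (Fin n → ℚ_[p])) := by
  have hp : p.Prime := Fact.out
  have hp1 : (1 : ℝ) < p := by exact_mod_cast hp.one_lt
  have hp0 : (0 : ℝ) < p := by linarith
  have hpQ : ((p : ℚ_[p])) ≠ 0 := by exact_mod_cast hp.ne_zero
  have hnormp : ‖(p : ℚ_[p])‖ = (p : ℝ)⁻¹ := Padic.norm_p
  by_cases hb : Bornology.IsBounded (N : Set (Fin n → ℚ_[p]))
  · exact Metric.isCompact_of_isClosed_isBounded hclosed hb
  exfalso
  rw [isBounded_iff_forall_norm_le] at hb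
  push_neg at hb
  -- choose unbounded elements
  choose x hxN hxnorm using fun k : ℕ => hb ((p : ℝ) ^ k)
  -- for each k, find the first m with ‖p^m • x k‖ ≤ 1
  have hnorm_smul : ∀ (m : ℕ) (v : Fin n → ℚ_[p]),
      ‖(p : ℚ_[p]) ^ m • v‖ = ((p : ℝ) ^ m)⁻¹ * ‖v‖ := by
    intro m v
    rw [norm_smul, norm_pow, hnormp, inv_pow]
  have hex : ∀ k : ℕ, ∃ m : ℕ, ‖(p : ℚ_[p]) ^ m • x k‖ ≤ 1 := by
    intro k
    obtain ⟨m, hm⟩ := pow_unbounded_of_one_lt ‖x k‖ hp1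
    refine ⟨m, ?_⟩
    rw [hnorm_smul]
    rw [inv_mul_le_iff₀ (by positivity), mul_one]
    exact hm.le
  set mk : ℕ → ℕ := fun k => Nat.find (hex k) with hmk
  have hmk_le : ∀ k, ‖(p : ℚ_[p]) ^ mk k • x k‖ ≤ 1 := fun k => Nat.find_spec (hex k)
  have hmk_min : ∀ k m, m < mk k → 1 < ‖(p : ℚ_[p]) ^ m • x k‖ := by
    intro k m hm
    have := Nat.find_min (hex k) hm
    linarith [lt_of_not_ge this]
  -- mk k > k
  have hmk_gt : ∀ k, k < mk k := by
    intro k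
    by_contra h
    push_neg at h
    have h1 := hmk_le k
    rw [hnorm_smul] at h1
    have h2 : ‖x k‖ ≤ (p : ℝ) ^ mk k := by
      rw [inv_mul_le_iff₀ (by positivity), mul_one] at h1
      exact h1
    have h3 : (p : ℝ) ^ k < (p : ℝ) ^ mk k := lt_of_lt_of_le (hxnorm k) h2
    have h4 : (p : ℝ) ^ mk k ≤ (p : ℝ) ^ k := pow_le_pow_right₀ (le_of_lt hp1) h
    linarith
  set y : ℕ → (Fin n → ℚ_[p]) := fun k => (p : ℚ_[p]) ^ mk k • x k with hy
  have hyN : ∀ k, y k ∈ N := by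
    intro k
    refine stmt12_stab p n N hclosed (x k) (hxN k) _ ?_
    rw [norm_pow, hnormp, inv_pow]
    exact inv_le_one_of_one_le₀ (one_le_pow₀ (le_of_lt hp1))
  have hy_le : ∀ k, ‖y k‖ ≤ 1 := hmk_le
  have hy_lb : ∀ k, (p : ℝ)⁻¹ < ‖y k‖ := by
    intro k
    have hpos : 0 < mk k := lt_of_le_of_lt (Nat.zero_le k) (hmk_gt k)
    have h1 : 1 < ‖(p : ℚ_[p]) ^ (mk k - 1) • x k‖ := hmk_min k _ (Nat.sub_lt hpos one_pos)
    have h2 : ‖y k‖ = (p : ℝ)⁻¹ * ‖(p : ℚ_[p]) ^ (mk k - 1) • x k‖ := by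
      rw [hy]
      simp only
      rw [hnorm_smul, hnorm_smul]
      rw [← mul_assoc]
      congr 1
      rw [← inv_pow, ← inv_pow, ← pow_succ']
      congr 1
      omega
    rw [h2]
    nlinarith [inv_pos.mpr hp0]
  -- the annulus is compact
  have hK : IsCompact (Metric.closedBall (0 : Fin n → ℚ_[p]) 1 \
      Metric.ball (0 : Fin n → ℚ_[p]) ((p : ℝ)⁻¹)) :=
    (isCompact_closedBall _ _).diff Metric.isOpen_ball
  have hyK : ∀ k, y k ∈ Metric.closedBall (0 : Fin n → ℚ_[p]) 1 \
      Metric.ball (0 : Fin n → ℚ_[p]) ((p : ℝ)⁻¹) := by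
    intro k
    constructor
    · rw [Metric.mem_closedBall, dist_zero_right]; exact hy_le k
    · rw [Metric.mem_ball, dist_zero_right]; push_neg; exact (hy_lb k).le
  obtain ⟨z, hzK, φ, hφ, hconv⟩ := hK.tendsto_subseq hyK
  have hz0 : z ≠ 0 := by
    intro h
    have := hzK.2
    rw [h, Metric.mem_ball, dist_self] at this
    exact this (inv_pos.mpr hp0)
  -- p^{-m} • z ∈ N for all m
  have hzN : ∀ m : ℕ, ((p : ℚ_[p]) ^ m)⁻¹ • z ∈ N := by
    intro m
    refine hclosed.mem_of_tendsto (hconv.const_smul (((p : ℚ_[p]) ^ m)⁻¹)) ?_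
    filter_upwards [Filter.eventually_ge_atTop m] with j hj
    have hjm : m ≤ mk (φ j) := le_of_lt (lt_of_le_of_lt (le_trans hj (hφ.le_apply)) (hmk_gt (φ j)))
    have heq : ((p : ℚ_[p]) ^ m)⁻¹ • (y ∘ φ) j = (p : ℚ_[p]) ^ (mk (φ j) - m) • x (φ j) := by
      show ((p : ℚ_[p]) ^ m)⁻¹ • ((p : ℚ_[p]) ^ mk (φ j) • x (φ j)) = _
      rw [smul_smul]
      congr 1
      have : (p : ℚ_[p]) ^ mk (φ j) = (p : ℚ_[p]) ^ (mk (φ j) - m) * (p : ℚ_[p]) ^ m := by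
        rw [← pow_add]
        congr 1
        omega
      rw [this]
      field_simp
    rw [heq]
    refine stmt12_stab p n N hclosed _ (hxN (φ j)) _ ?_
    rw [norm_pow, hnormp, inv_pow]
    exact inv_le_one_of_one_le₀ (one_le_pow₀ (le_of_lt hp1))
  -- the span of z lies in N
  have hsub : (Submodule.span ℚ_[p] {z} : Set (Fin n → ℚ_[p])) ⊆ N := by
    intro w hw
    rw [SetLike.mem_coe, Submodule.mem_span_singleton] at hw
    obtain ⟨a, rfl⟩ := hw
    obtain ⟨m, hm⟩ := pow_unbounded_of_one_lt ‖a‖ hp1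
    have heq : a • z = (a * (p : ℚ_[p]) ^ m) • (((p : ℚ_[p]) ^ m)⁻¹ • z) := by
      rw [smul_smul, mul_assoc, mul_inv_cancel₀ (pow_ne_zero _ hpQ), mul_one]
    rw [SetLike.mem_coe, heq]
    refine stmt12_stab p n N hclosed _ (hzN m) _ ?_
    rw [norm_mul, norm_pow, hnormp, inv_pow]
    calc ‖a‖ * ((p : ℝ) ^ m)⁻¹ ≤ (p : ℝ) ^ m * ((p : ℝ) ^ m)⁻¹ := by
          apply mul_le_mul_of_nonneg_right hm.le (by positivity)
      _ = 1 := mul_inv_cancel₀ (by positivity)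
  have hbot := hnosub _ hsub
  have : z ∈ Submodule.span ℚ_[p] {z} := Submodule.mem_span_singleton_self z
  rw [hbot, Submodule.mem_bot] at this
  exact hz0 this
end

section
/- Let G be a second countable Hausdorff topological group with topology σ, and let ω be a Hausdorff group topology on G coarser than σ. Then there exists a Hausdorff group topology ω' on G, coarser than ω, such that ω' is second countable. -/
/-!
Because σ is second countable and finer than ω, the set `{1}ᶜ` is ω-Lindelöf, so countably many
ω-neighbourhoods of `1` already have intersection `{1}`. Close this family (and `univ`) under
inversion, intersection, a chosen halving `V ↦ W` with `W * W ⊆ V`, and conjugation by the points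
of a countable dense set `D`. The result is countable and is a group filter basis: conjugation by
an arbitrary `x₀` reduces to conjugation by some `d ∈ D`, since
`x₀ u x₀⁻¹ = (x₀ d⁻¹) (d u d⁻¹) (d x₀⁻¹)` and `d` can be taken with `x₀ d⁻¹` close to `1`.
The group topology it generates is coarser than ω, Hausdorff, first countable and separable,
hence second countable.
-/

open Set Filter Topology TopologicalSpace Pointwise Uniformity

theorem exists_countable_nhds_sInter_subset_singleton {X : Type*} [TopologicalSpace X]
    [T2Space X] {x : X} (h : IsLindelof {x}ᶜ) :
    ∃ S : Set (Set X), S.Countable ∧ (∀ U ∈ S, U ∈ 𝓝 x) ∧ ⋂₀ S ⊆ {x} := by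
  choose! U hU V hV hUV using fun y (hy : y ∈ ({x}ᶜ : Set X)) ↦
    Filter.disjoint_iff.1 (disjoint_nhds_nhds.2 (Ne.symm hy))
  obtain ⟨t, htc, hts, hcover⟩ := h.elim_nhds_subcover V hV
  refine ⟨U '' t, htc.image U, forall_mem_image.2 fun y hy ↦ hU y (hts y hy), fun z hz ↦ ?_⟩
  by_contra hzx
  obtain ⟨y, hy, hzy⟩ := mem_iUnion₂.1 (hcover hzx)
  exact Set.disjoint_left.1 (hUV y (hts y hy)) (hz _ (mem_image_of_mem U hy)) hzy

theorem IsTopologicalGroup.secondCountableTopology_of_separable {G : Type*} [Group G]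
    [TopologicalSpace G] [IsTopologicalGroup G] [SeparableSpace G]
    [(𝓝 (1 : G)).IsCountablyGenerated] : SecondCountableTopology G :=
  let _ := IsTopologicalGroup.rightUniformSpace G
  have : (𝓤 G).IsCountablyGenerated := comap.isCountablyGenerated _ _
  UniformSpace.secondCountable_of_separable G

namespace CoarseGroupTopology

variable {G : Type*} [Group G] [TopologicalSpace G]

noncomputable def halve (V : Set G) : Set G :=
  Classical.epsilon fun W ↦ W ∈ 𝓝 (1 : G) ∧ W * W ⊆ V

theorem halve_spec [ContinuousMul G] {V : Set G} (hV : V ∈ 𝓝 1) :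
    halve V ∈ 𝓝 1 ∧ halve V * halve V ⊆ V := by
  obtain ⟨W, hW, hWV⟩ := exists_nhds_one_split hV
  exact Classical.epsilon_spec (p := fun W ↦ W ∈ 𝓝 (1 : G) ∧ W * W ⊆ V)
    ⟨W, hW, mul_subset_iff.2 hWV⟩

def hullStep (D : Set G) (S : Set (Set G)) : Set (Set G) :=
  S ∪ Inv.inv '' S ∪ image2 (· ∩ ·) S S ∪ halve '' S ∪
    ⋃ d ∈ D, preimage (fun x ↦ d * x * d⁻¹) '' S

def hull (D : Set G) (S : Set (Set G)) : Set (Set G) :=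
  ⋃ n, (hullStep D)^[n] (insert univ S)

variable {D : Set G} {S : Set (Set G)} {V W : Set G}

theorem subset_hullStep : S ⊆ hullStep D S :=
  fun _ hV ↦ Or.inl <| Or.inl <| Or.inl <| Or.inl hV

theorem monotone_iterate_hullStep (S : Set (Set G)) : Monotone fun n ↦ (hullStep D)^[n] S :=
  monotone_nat_of_le_succ fun n ↦ by
    simpa only [Function.iterate_succ_apply'] using subset_hullStep

theorem univ_mem_hull : univ ∈ hull D S := mem_iUnion.2 ⟨0, mem_insert _ _⟩

theorem subset_hull : S ⊆ hull D S := fun _ hU ↦ mem_iUnion.2 ⟨0, mem_insert_of_mem _ hU⟩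

theorem hullStep_iterate_subset_hull (n : ℕ) :
    hullStep D ((hullStep D)^[n] (insert univ S)) ⊆ hull D S := by
  rw [← Function.iterate_succ_apply' (hullStep D) n]
  exact subset_iUnion (fun n ↦ (hullStep D)^[n] (insert univ S)) (n + 1)

theorem inv_mem_hull (hV : V ∈ hull D S) : V⁻¹ ∈ hull D S := by
  obtain ⟨n, hn⟩ := mem_iUnion.1 hV
  exact hullStep_iterate_subset_hull n <| Or.inl <| Or.inl <| Or.inl <| Or.inr <|
    mem_image_of_mem _ hn

theorem inter_mem_hull (hV : V ∈ hull D S) (hW : W ∈ hull D S) : V ∩ W ∈ hull D S := by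
  obtain ⟨m, hm⟩ := mem_iUnion.1 hV
  obtain ⟨n, hn⟩ := mem_iUnion.1 hW
  have hmono := monotone_iterate_hullStep (D := D) (insert univ S)
  exact hullStep_iterate_subset_hull (max m n) <| Or.inl <| Or.inl <| Or.inr <|
    mem_image2_of_mem (hmono (le_max_left m n) hm) (hmono (le_max_right m n) hn)

theorem halve_mem_hull (hV : V ∈ hull D S) : halve V ∈ hull D S := by
  obtain ⟨n, hn⟩ := mem_iUnion.1 hV
  exact hullStep_iterate_subset_hull n <| Or.inl <| Or.inr <| mem_image_of_mem _ hn

theorem conj_preimage_mem_hull {d : G} (hd : d ∈ D) (hV : V ∈ hull D S) :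
    (fun x ↦ d * x * d⁻¹) ⁻¹' V ∈ hull D S := by
  obtain ⟨n, hn⟩ := mem_iUnion.1 hV
  exact hullStep_iterate_subset_hull n <| Or.inr <| mem_biUnion hd <| mem_image_of_mem _ hn

theorem hull_countable (hD : D.Countable) (hS : S.Countable) : (hull D S).Countable := by
  refine countable_iUnion fun n ↦ ?_
  induction n with
  | zero => exact hS.insert univ
  | succ n ih =>
    rw [Function.iterate_succ_apply']
    exact (((ih.union (ih.image _)).union (ih.image2 ih _)).union (ih.image _)).union
      (hD.biUnion fun d _ ↦ ih.image _)

variable [IsTopologicalGroup G]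

theorem hullStep_subset_nhds_one (hS : ∀ U ∈ S, U ∈ 𝓝 1) : ∀ U ∈ hullStep D S, U ∈ 𝓝 1 := by
  intro U hU
  simp only [hullStep, mem_union, mem_iUnion] at hU
  rcases hU with ((((hU | ⟨W, hW, rfl⟩) | ⟨W₁, hW₁, W₂, hW₂, rfl⟩) | ⟨W, hW, rfl⟩) |
    ⟨d, -, W, hW, rfl⟩)
  · exact hS U hU
  · exact inv_mem_nhds_one G (hS W hW)
  · exact inter_mem (hS W₁ hW₁) (hS W₂ hW₂)
  · exact (halve_spec (hS W hW)).1
  · exact (IsTopologicalGroup.continuous_conj d).tendsto' 1 1 (by simp) (hS W hW)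

theorem mem_nhds_one_of_mem_hull (hS : ∀ U ∈ S, U ∈ 𝓝 1) (hV : V ∈ hull D S) : V ∈ 𝓝 1 := by
  obtain ⟨n, hn⟩ := mem_iUnion.1 hV
  induction n generalizing V with
  | zero => rcases hn with rfl | hn; exacts [univ_mem, hS V hn]
  | succ n ih =>
    rw [Function.iterate_succ_apply'] at hn
    exact hullStep_subset_nhds_one (fun U hU ↦ ih (mem_iUnion.2 ⟨n, hU⟩) hU) V hn

theorem exists_conj_subset_of_mem_hull (hD : Dense D) (hS : ∀ U ∈ S, U ∈ 𝓝 1)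
    (hV : V ∈ hull D S) (x₀ : G) :
    ∃ V₁ ∈ hull D S, V₁ ⊆ (fun x ↦ x₀ * x * x₀⁻¹) ⁻¹' V := by
  have hW₁ := halve_spec (mem_nhds_one_of_mem_hull hS hV)
  have hW₂ := halve_spec hW₁.1
  have hnhds : {y | x₀ * y⁻¹ ∈ halve (halve V) ∧ y * x₀⁻¹ ∈ halve V} ∈ 𝓝 x₀ :=
    inter_mem ((continuous_const.mul continuous_inv).tendsto' x₀ 1 (mul_inv_cancel x₀) hW₂.1)
      ((continuous_id.mul continuous_const).tendsto' x₀ 1 (mul_inv_cancel x₀) hW₁.1)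
  obtain ⟨d, hd, hdW₂, hdW₁⟩ := hD.inter_nhds_nonempty hnhds
  refine ⟨_, conj_preimage_mem_hull hd (halve_mem_hull (halve_mem_hull hV)), fun u hu ↦ ?_⟩
  have hsplit : x₀ * u * x₀⁻¹ = x₀ * d⁻¹ * (d * u * d⁻¹) * (d * x₀⁻¹) := by group
  show x₀ * u * x₀⁻¹ ∈ V
  rw [hsplit]
  exact hW₁.2 (mul_mem_mul (hW₂.2 (mul_mem_mul hdW₂ hu)) hdW₁)

@[reducible]
noncomputable def groupFilterBasis (hD : Dense D) (hS : ∀ U ∈ S, U ∈ 𝓝 1) :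
    GroupFilterBasis G where
  sets := hull D S
  nonempty := ⟨univ, univ_mem_hull⟩
  inter_sets hV hW := ⟨_, inter_mem_hull hV hW, subset_rfl⟩
  one' hV := mem_of_mem_nhds (mem_nhds_one_of_mem_hull hS hV)
  mul' hV := ⟨_, halve_mem_hull hV, (halve_spec (mem_nhds_one_of_mem_hull hS hV)).2⟩
  inv' hV := ⟨_, inv_mem_hull hV, subset_rfl⟩
  conj' x₀ _ hV := exists_conj_subset_of_mem_hull hD hS hV x₀

end CoarseGroupTopology

open CoarseGroupTopology in
theorem exists_coarser_t2_secondCountable_groupTopology {G : Type*} [Group G]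
    [t : TopologicalSpace G] [IsTopologicalGroup G] [SeparableSpace G] {S : Set (Set G)}
    (hSc : S.Countable) (hS1 : ∀ U ∈ S, U ∈ 𝓝 1) (hS : ⋂₀ S ⊆ {1}) :
    ∃ t' : TopologicalSpace G, t ≤ t' ∧ @IsTopologicalGroup G t' _ ∧ @T2Space G t' ∧
      @SecondCountableTopology G t' := by
  obtain ⟨D, hDc, hD⟩ := exists_countable_dense G
  let B := groupFilterBasis hD hS1
  have hle : t ≤ B.topology := le_of_nhds_le_nhds fun x ↦ by
    rw [B.nhds_eq, GroupFilterBasis.N, ← map_mul_left_nhds_one x]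
    exact map_mono (B.toFilterBasis.hasBasis.ge_iff.2 fun V hV ↦ mem_nhds_one_of_mem_hull hS1 hV)
  have hsep : @SeparableSpace G B.topology :=
    @DenseRange.separableSpace G G t _ B.topology id (@denseRange_id G B.topology)
      (continuous_id_of_le hle)
  have hcg : (@nhds G B.topology 1).IsCountablyGenerated :=
    HasCountableBasis.isCountablyGenerated ⟨B.nhds_one_hasBasis, hull_countable hDc hSc⟩
  refine ⟨B.topology, hle, B.isTopologicalGroup,
    (B.t2Space_iff_sInter_subset (t := B.topology) rfl).2 ((sInter_subset_sInter subset_hull).trans hS), ?_⟩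
  exact @IsTopologicalGroup.secondCountableTopology_of_separable G _ B.topology
    B.isTopologicalGroup hsep hcg

theorem stmt13_general {G : Type*} [Group G] (σ ω : TopologicalSpace G)
    (hσsc : @SecondCountableTopology G σ)
    (hωgrp : @IsTopologicalGroup G ω _) (hωt2 : @T2Space G ω)
    (hcoarser : σ ≤ ω) :
    ∃ ω' : TopologicalSpace G, ω ≤ ω' ∧ @IsTopologicalGroup G ω' _ ∧ @T2Space G ω' ∧
      @SecondCountableTopology G ω' := by
  have hid : Continuous[σ, ω] id := continuous_id_of_le hcoarser
  have hsep : @SeparableSpace G ω := @DenseRange.separableSpace _ _ σ _ ω _ denseRange_id hid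
  have hLin : @IsLindelof G ω {1}ᶜ := by
    simpa only [image_id] using
      @IsLindelof.image G G σ ω _ id (@HereditarilyLindelofSpace.isLindelof G σ _ _) hid
  obtain ⟨S, hSc, hS1, hS⟩ := @exists_countable_nhds_sInter_subset_singleton G ω hωt2 1 hLin
  exact @exists_coarser_t2_secondCountable_groupTopology G _ ω hωgrp hsep S hSc hS1 hS

/-- Let `G` be a second countable Hausdorff topological group with topology
`σ`, and let `ω` be a Hausdorff group topology on `G` coarser than `σ`. Then there exists a
Hausdorff group topology `ω'` on `G`, coarser than `ω`, such that `ω'` is second countable.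

(In Mathlib's order on `TopologicalSpace G`, "coarser" corresponds to `≤` from the finer
topology to the coarser one.) -/
theorem stmt13 {G : Type*} [Group G] (σ ω : TopologicalSpace G)
    (hσgrp : @IsTopologicalGroup G σ _) (hσt2 : @T2Space G σ)
    (hσsc : @SecondCountableTopology G σ)
    (hωgrp : @IsTopologicalGroup G ω _) (hωt2 : @T2Space G ω)
    (hcoarser : σ ≤ ω) :
    ∃ ω' : TopologicalSpace G, ω ≤ ω' ∧ @IsTopologicalGroup G ω' _ ∧ @T2Space G ω' ∧
      @SecondCountableTopology G ω' :=
  stmt13_general σ ω hσsc hωgrp hωt2 hcoarser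
end
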